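/- Let L be a connected graph Laplacian and L̃ a symmetric positive semidefinite matrix with the same kernel satisfying (1-δ)·L ⪯ L̃ ⪯ (1+δ)·L where δ = ε/8 and 0 < ε ≤ 1. Then the approximate effective resistance R̂(u,v) = ‖W^{1/2} B L̃⁺ (χ_u − χ_v)‖² satisfies (1-ε)·R(u,v) ≤ R̂(u,v) ≤ (1+ε)·R(u,v), where R(u,v) = (χ_u − χ_v)ᵀ L⁺ (χ_u − χ_v). -/

import Mathlib

/-!
For a positive semidefinite `A` and a solution of `A x = χ`, the energy `χᵀx` is the maximum of
`2 zᵀχ - zᵀAz` over all `z`. Testing this at a multiple of the other solution shows that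
`a A ⪯ B` forces `a χᵀB⁺χ ≤ χᵀA⁺χ`. With `y = L̃⁺χ` one has `R̂ = yᵀLy` and `yᵀL̃y = χᵀy`, so the
two spectral bounds give `(1-δ)² R̂ ≤ R ≤ (1+δ)² R̂`, and `δ = ε/8` is small enough to turn these
into `(1 ± ε)` bounds. Both pseudoinverses solve their systems on `χ = χ_u - χ_v` because `χ` is
orthogonal to the common kernel, the constants.
-/

open Matrix

def IsMoorePenrose {n : ℕ} (A P : Matrix (Fin n) (Fin n) ℝ) : Prop :=
  A * P * A = A ∧ P * A * P = P ∧ (A * P)ᵀ = A * P ∧ (P * A)ᵀ = P * A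

namespace Matrix.PosSemidef

variable {ι : Type*} [Fintype ι] {A B : Matrix ι ι ℝ} {x y χ : ι → ℝ}

lemma dotProduct_mulVec_self_nonneg (hA : A.PosSemidef) (z : ι → ℝ) : 0 ≤ z ⬝ᵥ A *ᵥ z := by
  simpa using hA.dotProduct_mulVec_nonneg z

/-- The gap is `(z - x)ᵀA(z - x) ≥ 0`. -/
theorem two_mul_dotProduct_sub_le (hA : A.PosSemidef) (hx : A *ᵥ x = χ) (z : ι → ℝ) :
    2 * (z ⬝ᵥ χ) - z ⬝ᵥ A *ᵥ z ≤ χ ⬝ᵥ x := by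
  have hgap := hA.dotProduct_mulVec_self_nonneg (z - x)
  have hsymm : x ⬝ᵥ A *ᵥ z = z ⬝ᵥ χ := by
    rw [dotProduct_mulVec, ← mulVec_transpose, (isHermitian_iff_isSymm.mp hA.isHermitian).eq, hx,
      dotProduct_comm]
  rw [mulVec_sub, sub_dotProduct, dotProduct_sub, dotProduct_sub, hx, hsymm] at hgap
  linarith [dotProduct_comm x χ]

theorem mul_dotProduct_le_of_mul_le (hA : A.PosSemidef) {a : ℝ} (ha : 0 ≤ a)
    (hAB : ∀ z, a * (z ⬝ᵥ A *ᵥ z) ≤ z ⬝ᵥ B *ᵥ z) (hx : A *ᵥ x = χ) (hy : B *ᵥ y = χ) :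
    a * (χ ⬝ᵥ y) ≤ χ ⬝ᵥ x := by
  have hvar := hA.two_mul_dotProduct_sub_le hx (a • y)
  simp only [mulVec_smul, smul_dotProduct, dotProduct_smul, smul_eq_mul] at hvar
  have hyBy : y ⬝ᵥ B *ᵥ y = χ ⬝ᵥ y := by rw [hy, dotProduct_comm]
  nlinarith [mul_le_mul_of_nonneg_left (hAB y) ha, dotProduct_comm y χ]

theorem sq_mul_dotProduct_le_and_le_sq_mul (hA : A.PosSemidef) (hB : B.PosSemidef) {a b : ℝ}
    (ha : 0 ≤ a) (hb : 0 < b) (hAB : ∀ z, a * (z ⬝ᵥ A *ᵥ z) ≤ z ⬝ᵥ B *ᵥ z)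
    (hBA : ∀ z, z ⬝ᵥ B *ᵥ z ≤ b * (z ⬝ᵥ A *ᵥ z)) (hx : A *ᵥ x = χ) (hy : B *ᵥ y = χ) :
    a ^ 2 * (y ⬝ᵥ A *ᵥ y) ≤ χ ⬝ᵥ x ∧ χ ⬝ᵥ x ≤ b ^ 2 * (y ⬝ᵥ A *ᵥ y) := by
  have hyBy : y ⬝ᵥ B *ᵥ y = χ ⬝ᵥ y := by rw [hy, dotProduct_comm]
  have hup := hA.mul_dotProduct_le_of_mul_le ha hAB hx hy
  have hlo := hB.mul_dotProduct_le_of_mul_le (inv_nonneg.mpr hb.le)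
    (fun z => (inv_mul_le_iff₀ hb).mpr (hBA z)) hy hx
  rw [inv_mul_le_iff₀ hb] at hlo
  constructor
  · nlinarith [mul_le_mul_of_nonneg_left (hAB y) ha]
  · nlinarith [mul_le_mul_of_nonneg_left (hBA y) hb.le]

end Matrix.PosSemidef

theorem IsMoorePenrose.mulVec_mulVec_of_sum_eq_zero {n : ℕ} {A P : Matrix (Fin n) (Fin n) ℝ}
    (hAP : IsMoorePenrose A P) (hA : A.IsSymm)
    (hker : ∀ x, A *ᵥ x = 0 ↔ ∃ c : ℝ, ∀ k, x k = c) {χ : Fin n → ℝ} (hχ : ∑ k, χ k = 0) :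
    A *ᵥ (P *ᵥ χ) = χ := by
  have hAAP : A * (A * P) = A := by
    simpa only [transpose_mul, hAP.2.2.1, hA.eq] using congrArg transpose hAP.1
  have hA1 : 1 ᵥ* A = 0 := by
    rw [← mulVec_transpose, hA.eq]
    exact (hker 1).mpr ⟨1, fun _ => rfl⟩
  set z := χ - (A * P) *ᵥ χ
  have hz_ker : A *ᵥ z = 0 := by
    rw [mulVec_sub, mulVec_mulVec, hAAP, sub_self]
  have hz_sum : ∑ k, z k = 0 := by
    rw [← one_dotProduct, dotProduct_sub, one_dotProduct, hχ, ← mulVec_mulVec, dotProduct_mulVec,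
      hA1, zero_dotProduct, sub_zero]
  obtain ⟨c, hc⟩ := (hker z).mp hz_ker
  have hz : z = 0 := by
    funext k
    simp only [hc, Finset.sum_const, Finset.card_univ, Fintype.card_fin, nsmul_eq_mul,
      mul_eq_zero, Nat.cast_eq_zero] at hz_sum
    rcases hz_sum with hn | hc0
    · exact absurd hn (Fin.pos k).ne'
    · simp [hc, hc0]
  rw [mulVec_mulVec]
  exact (sub_eq_zero.mp hz).symm

section Laplacian

variable {ι E : Type*} [Fintype ι] [Fintype E] [DecidableEq E] (B : Matrix E ι ℝ) {w : E → ℝ}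

lemma posSemidef_transpose_mul_diagonal_mul (hw : ∀ e, 0 ≤ w e) :
    (Bᵀ * diagonal w * B).PosSemidef := by
  simpa [conjTranspose_eq_transpose_of_trivial] using
    (PosSemidef.diagonal hw).conjTranspose_mul_mul_same B

lemma sum_sq_diagonal_sqrt_mul_mulVec (hw : ∀ e, 0 ≤ w e) (y : ι → ℝ) :
    ∑ e, ((diagonal (fun e => √(w e)) * B) *ᵥ y) e ^ 2 = y ⬝ᵥ (Bᵀ * diagonal w * B) *ᵥ y := by
  rw [← mulVec_mulVec, Matrix.mul_assoc, ← mulVec_mulVec, ← mulVec_mulVec, dotProduct_mulVec,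
    vecMul_transpose]
  simp only [mulVec_diagonal, dotProduct, mul_pow, Real.sq_sqrt (hw _)]
  exact Finset.sum_congr rfl fun e _ => by ring

end Laplacian

lemma one_sub_mul_le_and_le_one_add_mul_of_sq_bounds {ε R R' : ℝ} (hε0 : 0 ≤ ε) (hε1 : ε ≤ 1)
    (hR' : 0 ≤ R') (hup : (1 - ε / 8) ^ 2 * R' ≤ R) (hlo : R ≤ (1 + ε / 8) ^ 2 * R') :
    (1 - ε) * R ≤ R' ∧ R' ≤ (1 + ε) * R := by
  have hlo_factor : (1 - ε) * (1 + ε / 8) ^ 2 ≤ 1 := by nlinarith [pow_nonneg hε0 3]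
  have hup_factor : 1 ≤ (1 + ε) * (1 - ε / 8) ^ 2 := by
    nlinarith [mul_nonneg hε0 (sub_nonneg.2 hε1), pow_nonneg hε0 3]
  constructor
  · calc (1 - ε) * R ≤ (1 - ε) * ((1 + ε / 8) ^ 2 * R') :=
          mul_le_mul_of_nonneg_left hlo (by linarith)
      _ = (1 - ε) * (1 + ε / 8) ^ 2 * R' := by ring
      _ ≤ R' := mul_le_of_le_one_left hR' hlo_factor
  · calc R' ≤ (1 + ε) * (1 - ε / 8) ^ 2 * R' := le_mul_of_one_le_left hR' hup_factor
      _ = (1 + ε) * ((1 - ε / 8) ^ 2 * R') := by ring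
      _ ≤ (1 + ε) * R := mul_le_mul_of_nonneg_left hup (by linarith)

theorem stmt_6_general {m n : ℕ} (B : Matrix (Fin m) (Fin n) ℝ) (w : Fin m → ℝ)
    (hw : ∀ e, 0 < w e)
    (L Lp Lt Ltp : Matrix (Fin n) (Fin n) ℝ) (ε δ : ℝ)
    (hε0 : 0 < ε) (hε1 : ε ≤ 1) (hδ : δ = ε / 8)
    (hL : L = Bᵀ * Matrix.diagonal w * B)
    (hconn : ∀ x : Fin n → ℝ, L.mulVec x = 0 ↔ ∃ c : ℝ, ∀ k, x k = c)
    (hLt : Lt.PosSemidef)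
    (hker : ∀ x : Fin n → ℝ, Lt.mulVec x = 0 ↔ L.mulVec x = 0)
    (h₁ : ∀ x : Fin n → ℝ, (1 - δ) * (x ⬝ᵥ L.mulVec x) ≤ x ⬝ᵥ Lt.mulVec x)
    (h₂ : ∀ x : Fin n → ℝ, x ⬝ᵥ Lt.mulVec x ≤ (1 + δ) * (x ⬝ᵥ L.mulVec x))
    (hLp : IsMoorePenrose L Lp) (hLtp : IsMoorePenrose Lt Ltp) :
    ∀ u v : Fin n,
      (1 - ε) * ((Pi.single u 1 - Pi.single v 1) ⬝ᵥ Lp.mulVec (Pi.single u 1 - Pi.single v 1)) ≤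
        (∑ e : Fin m,
          ((Matrix.diagonal (fun e => Real.sqrt (w e)) * B * Ltp).mulVec
            (Pi.single u 1 - Pi.single v 1) e) ^ 2) ∧
      (∑ e : Fin m,
          ((Matrix.diagonal (fun e => Real.sqrt (w e)) * B * Ltp).mulVec
            (Pi.single u 1 - Pi.single v 1) e) ^ 2) ≤
        (1 + ε) * ((Pi.single u 1 - Pi.single v 1) ⬝ᵥ Lp.mulVec (Pi.single u 1 - Pi.single v 1)) := by
  intro u v
  set χ : Fin n → ℝ := Pi.single u 1 - Pi.single v 1
  subst hL hδ
  have hw' : ∀ e, 0 ≤ w e := fun e => (hw e).le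
  have hL := posSemidef_transpose_mul_diagonal_mul B hw'
  have hχ : ∑ k, χ k = 0 := by simp [χ, Finset.sum_sub_distrib]
  have hx := hLp.mulVec_mulVec_of_sum_eq_zero (isHermitian_iff_isSymm.mp hL.isHermitian) hconn hχ
  have hy := hLtp.mulVec_mulVec_of_sum_eq_zero (isHermitian_iff_isSymm.mp hLt.isHermitian)
    (fun z => (hker z).trans (hconn z)) hχ
  rw [← mulVec_mulVec, sum_sq_diagonal_sqrt_mul_mulVec B hw']
  obtain ⟨hup, hlo⟩ := hL.sq_mul_dotProduct_le_and_le_sq_mul hLt (by linarith) (by linarith) h₁ h₂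
    hx hy
  exact one_sub_mul_le_and_le_one_add_mul_of_sq_bounds hε0.le hε1
    (hL.dotProduct_mulVec_self_nonneg _) hup hlo

/-- If `L̃` is symmetric PSD with the same kernel as the connected Laplacian
`L = BᵀWB` and `(1-δ)L ⪯ L̃ ⪯ (1+δ)L` with `δ = ε/8`, `0 < ε ≤ 1`, then the
approximate effective resistances `R̂(u,v) = ‖W^{1/2} B L̃⁺ (χ_u - χ_v)‖²`
satisfy `(1-ε)·R(u,v) ≤ R̂(u,v) ≤ (1+ε)·R(u,v)`. -/
theorem stmt_6 {m n : ℕ} (B : Matrix (Fin m) (Fin n) ℝ) (w : Fin m → ℝ)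
    (hw : ∀ e, 0 < w e)
    (hB : ∀ e : Fin m, ∃ i j : Fin n, i ≠ j ∧
      (fun k => B e k) = (Pi.single i 1 - Pi.single j 1 : Fin n → ℝ))
    (L Lp Lt Ltp : Matrix (Fin n) (Fin n) ℝ) (ε δ : ℝ)
    (hε0 : 0 < ε) (hε1 : ε ≤ 1) (hδ : δ = ε / 8)
    (hL : L = Bᵀ * Matrix.diagonal w * B)
    (hconn : ∀ x : Fin n → ℝ, L.mulVec x = 0 ↔ ∃ c : ℝ, ∀ k, x k = c)
    (hLt : Lt.PosSemidef)
    (hker : ∀ x : Fin n → ℝ, Lt.mulVec x = 0 ↔ L.mulVec x = 0)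
    (h₁ : ∀ x : Fin n → ℝ, (1 - δ) * (x ⬝ᵥ L.mulVec x) ≤ x ⬝ᵥ Lt.mulVec x)
    (h₂ : ∀ x : Fin n → ℝ, x ⬝ᵥ Lt.mulVec x ≤ (1 + δ) * (x ⬝ᵥ L.mulVec x))
    (hLp : IsMoorePenrose L Lp) (hLtp : IsMoorePenrose Lt Ltp) :
    ∀ u v : Fin n,
      (1 - ε) * ((Pi.single u 1 - Pi.single v 1) ⬝ᵥ Lp.mulVec (Pi.single u 1 - Pi.single v 1)) ≤
        (∑ e : Fin m,
          ((Matrix.diagonal (fun e => Real.sqrt (w e)) * B * Ltp).mulVec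
            (Pi.single u 1 - Pi.single v 1) e) ^ 2) ∧
      (∑ e : Fin m,
          ((Matrix.diagonal (fun e => Real.sqrt (w e)) * B * Ltp).mulVec
            (Pi.single u 1 - Pi.single v 1) e) ^ 2) ≤
        (1 + ε) * ((Pi.single u 1 - Pi.single v 1) ⬝ᵥ Lp.mulVec (Pi.single u 1 - Pi.single v 1)) :=
  stmt_6_general B w hw L Lp Lt Ltp ε δ hε0 hε1 hδ hL hconn hLt hker h₁ h₂ hLp hLtp
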